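/- Let A be a finitely generated abelian group. Then the short exact sequence 1 → ∇(A) → A ⊗ A → A ∧ A → 1 splits on the left (there is a homomorphism α : A ⊗ A → ∇(A) restricting to the identity on ∇(A)); consequently A ⊗ A ≅ ∇(A) × (A ∧ A). -/

import Mathlib

/- Nonabelian tensor square framework (Brown–Loday). -/

namespace NATensor

variable (G : Type*) [Group G]

/-- The relator set for the nonabelian tensor square of `G`:
`g g' ⊗ h = (ᵍg' ⊗ ᵍh)(g ⊗ h)` and `g ⊗ h h' = (g ⊗ h)(ʰg ⊗ ʰh')`. -/
def rels : Set (FreeGroup (G × G)) :=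
  {r | (∃ g g' h : G,
          r = FreeGroup.of (g * g', h) *
              (FreeGroup.of (g * g' * g⁻¹, g * h * g⁻¹) * FreeGroup.of (g, h))⁻¹) ∨
       (∃ g h h' : G,
          r = FreeGroup.of (g, h * h') *
              (FreeGroup.of (g, h) * FreeGroup.of (h * g * h⁻¹, h * h' * h⁻¹))⁻¹)}

/-- The nonabelian tensor square `G ⊗ G`. -/
abbrev TS := PresentedGroup (rels G)

variable {G}

/-- The generator `g ⊗ h` of the nonabelian tensor square. -/
def tmul (g h : G) : TS G := PresentedGroup.of (g, h)

lemma mk_rel_eq_one {r : FreeGroup (G × G)} (hr : r ∈ rels G) :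
    (PresentedGroup.mk (rels G) r : TS G) = 1 :=
  (QuotientGroup.eq_one_iff r).mpr (Subgroup.subset_normalClosure hr)

lemma tmul_rel₁ (g g' h : G) :
    tmul (g * g') h = tmul (g * g' * g⁻¹) (g * h * g⁻¹) * tmul g h := by
  have h1 := mk_rel_eq_one (G := G) (Or.inl ⟨g, g', h, rfl⟩)
  simp only [map_mul, map_inv, mul_inv_eq_one] at h1
  exact h1

lemma tmul_rel₂ (g h h' : G) :
    tmul g (h * h') = tmul g h * tmul (h * g * h⁻¹) (h * h' * h⁻¹) := by
  have h1 := mk_rel_eq_one (G := G) (Or.inr ⟨g, h, h', rfl⟩)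
  simp only [map_mul, map_inv, mul_inv_eq_one] at h1
  exact h1

variable (G)

/-- The homomorphism `κ : G ⊗ G → G`, `g ⊗ h ↦ [g,h] = g h g⁻¹ h⁻¹` (its image is `[G,G]`). -/
def kappa : TS G →* G :=
  PresentedGroup.toGroup (f := fun x : G × G => x.1 * x.2 * x.1⁻¹ * x.2⁻¹) (by
    rintro r (⟨g, g', h, rfl⟩ | ⟨g, h, h', rfl⟩) <;>
      simp only [map_mul, map_inv, FreeGroup.lift_apply_of] <;> group)

variable {G}

@[simp] lemma kappa_tmul (g h : G) : kappa G (tmul g h) = g * h * g⁻¹ * h⁻¹ :=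
  PresentedGroup.toGroup.of _

variable (G)

/-- `J(G) = ker κ ≅ π₃(SK(G,1))`. -/
def J : Subgroup (TS G) := (kappa G).ker

/-- `∇(G)`: the (normal) subgroup of `G ⊗ G` generated by the elements `x ⊗ x`. -/
def nabla : Subgroup (TS G) :=
  Subgroup.normalClosure {t | ∃ x : G, t = tmul x x}

/-- `Δ(G)`: the (normal) subgroup of `G ⊗ G` generated by the `(x ⊗ y)(y ⊗ x)`. -/
def delta : Subgroup (TS G) :=
  Subgroup.normalClosure {t | ∃ x y : G, t = tmul x y * tmul y x}

instance : (nabla G).Normal := Subgroup.normalClosure_normal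

instance : (delta G).Normal := Subgroup.normalClosure_normal

/-- The exterior square `G ∧ G = (G ⊗ G)/∇(G)`. -/
abbrev ES := TS G ⧸ nabla G

/-- The symmetric square `G ⊗̃ G = (G ⊗ G)/Δ(G)`. -/
abbrev SS := TS G ⧸ delta G

variable {G}

/-- The element `g ∧ h` of the exterior square. -/
def emul (g h : G) : ES G := QuotientGroup.mk' (nabla G) (tmul g h)

/-- The image of `g ⊗ h` in the symmetric square. -/
def smul (g h : G) : SS G := QuotientGroup.mk' (delta G) (tmul g h)

variable {H : Type*} [Group H]

/-- The induced homomorphism `G ⊗ G → H ⊗ H` of a homomorphism `f : G → H`. -/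
def tmap (f : G →* H) : TS G →* TS H :=
  PresentedGroup.toGroup (f := fun x : G × G => tmul (f x.1) (f x.2)) (by
    rintro r (⟨g, g', h, rfl⟩ | ⟨g, h, h', rfl⟩) <;>
      simp only [map_mul, map_inv, FreeGroup.lift_apply_of, mul_inv_eq_one]
    · rw [tmul_rel₁]
    · rw [tmul_rel₂])

@[simp] lemma tmap_tmul (f : G →* H) (g h : G) :
    tmap f (tmul g h) = tmul (f g) (f h) :=
  PresentedGroup.toGroup.of _

lemma nabla_le_comap_nabla (f : G →* H) :
    nabla G ≤ MonoidHom.ker ((QuotientGroup.mk' (nabla H)).comp (tmap f)) := by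
  refine Subgroup.normalClosure_le_normal ?_
  rintro _ ⟨y, rfl⟩
  simp only [SetLike.mem_coe, MonoidHom.mem_ker, MonoidHom.comp_apply, tmap_tmul,
    QuotientGroup.mk'_apply, QuotientGroup.eq_one_iff]
  exact Subgroup.subset_normalClosure ⟨f y, rfl⟩

lemma delta_le_comap_delta (f : G →* H) :
    delta G ≤ MonoidHom.ker ((QuotientGroup.mk' (delta H)).comp (tmap f)) := by
  refine Subgroup.normalClosure_le_normal ?_
  rintro _ ⟨x, y, rfl⟩
  simp only [SetLike.mem_coe, MonoidHom.mem_ker, MonoidHom.comp_apply, map_mul, tmap_tmul,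
    QuotientGroup.mk'_apply, ← QuotientGroup.mk_mul, QuotientGroup.eq_one_iff]
  exact Subgroup.subset_normalClosure ⟨f x, f y, rfl⟩

/-- The induced homomorphism `G ∧ G → H ∧ H` of a homomorphism `f : G → H`. -/
def emap (f : G →* H) : ES G →* ES H :=
  QuotientGroup.lift (nabla G) ((QuotientGroup.mk' (nabla H)).comp (tmap f))
    (fun x hx => MonoidHom.mem_ker.mp (nabla_le_comap_nabla f hx))

@[simp] lemma emap_emul (f : G →* H) (g h : G) :
    emap f (emul g h) = emul (f g) (f h) := by
  simp [emap, emul, QuotientGroup.mk'_apply, QuotientGroup.lift_mk']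
  exact congrArg (QuotientGroup.mk (s := nabla H)) (tmap_tmul f g h)

/-- The induced homomorphism `G ⊗̃ G → H ⊗̃ H` of a homomorphism `f : G → H`. -/
def smap (f : G →* H) : SS G →* SS H :=
  QuotientGroup.lift (delta G) ((QuotientGroup.mk' (delta H)).comp (tmap f))
    (fun x hx => MonoidHom.mem_ker.mp (delta_le_comap_delta f hx))

variable (G)

lemma nabla_le_ker_kappa : nabla G ≤ (kappa G).ker := by
  refine Subgroup.normalClosure_le_normal ?_
  rintro _ ⟨x, rfl⟩
  simp only [SetLike.mem_coe, MonoidHom.mem_ker, kappa_tmul]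
  group

/-- The homomorphism `κ' : G ∧ G → G`, `g ∧ h ↦ [g,h]` (its image is `[G,G]`). -/
def kappa' : ES G →* G :=
  QuotientGroup.lift (nabla G) (kappa G)
    (fun x hx => MonoidHom.mem_ker.mp (nabla_le_ker_kappa G hx))

/-- The Schur multiplier `M(G) = ker κ' ≅ H₂(G)`. -/
def M : Subgroup (ES G) := (kappa' G).ker

/-- `J̃(G) = J(G)/Δ(G) ≅ π₂ˢ(K(G,1))`, realized as the image of `J(G)` in `G ⊗̃ G`. -/
def Jt : Subgroup (SS G) := Subgroup.map (QuotientGroup.mk' (delta G)) (J G)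

/-- `∇(G)/Δ(G)`, realized as the image of `∇(G)` in `G ⊗̃ G`. -/
def nablaBar : Subgroup (SS G) := Subgroup.map (QuotientGroup.mk' (delta G)) (nabla G)

end NATensor

/-!
For abelian `A` the nonabelian tensor square is the ordinary tensor square `A ⊗_ℤ A`, and `∇(A)`
becomes the span `N` of the elements `a ⊗ a`. A finitely generated `A` is a sum of cyclic groups
`Cᵢ`; with the projections `pᵢ` and the flip `τ`, the map
`B = ∑ᵢ pᵢ ⊗ pᵢ + ∑_{i < j} (1 + τ)(pᵢ ⊗ pⱼ)` is a projection onto `N`. It lands in `N` because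
`Cᵢ ⊗ Cᵢ` is spanned by `gᵢ ⊗ gᵢ` for a generator `gᵢ`, and
`x ⊗ y + y ⊗ x = (x + y) ⊗ (x + y) - x ⊗ x - y ⊗ y`; it fixes `a ⊗ a = ∑_{i,j} aᵢ ⊗ aⱼ` since it
sends this to `∑_{i ≤ j} aᵢ ⊗ aⱼ + ∑_{i < j} aⱼ ⊗ aᵢ`. A retraction onto a normal subgroup splits
the group as a direct product with the quotient.
-/

universe u

open TensorProduct

theorem Fintype.sum_sum_ite_lt_add {ι M : Type*} [Fintype ι] [LinearOrder ι] [AddCommMonoid M]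
    (f : ι → ι → M) :
    ∑ i, ∑ j, (if i = j then f i j else if i < j then f i j + f j i else 0) =
      ∑ i, ∑ j, f i j := by
  have hsplit : ∀ i j, (if i = j then f i j else if i < j then f i j + f j i else 0) =
      (if i ≤ j then f i j else 0) + (if i < j then f j i else 0) := by
    intro i j
    rcases lt_trichotomy i j with h | rfl | h
    · simp [h, h.ne, h.le]
    · simp
    · simp [h.ne', not_le.2 h, lt_asymm h]
  simp_rw [hsplit, Finset.sum_add_distrib]
  rw [Finset.sum_comm (f := fun i j => if i < j then f j i else 0), ← Finset.sum_add_distrib]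
  refine Finset.sum_congr rfl fun i _ => ?_
  rw [← Finset.sum_add_distrib]
  refine Finset.sum_congr rfl fun j _ => ?_
  rcases le_or_gt i j with h | h
  · simp [h, not_lt.2 h]
  · simp [h, not_le.2 h]

/-- A family of endomorphisms summing to the identity, each with cyclic range; the projections onto
the summands of a decomposition into cyclic submodules are the example. -/
structure IsCyclicDecomposition {R M ι : Type*} [CommRing R] [AddCommGroup M] [Module R M]
    [Fintype ι] (p : ι → Module.End R M) : Prop where
  sum_eq_id : ∑ i, p i = LinearMap.id
  isPrincipal_range : ∀ i, (LinearMap.range (p i)).IsPrincipal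

namespace IsCyclicDecomposition

variable {R M N ι : Type*} [CommRing R] [AddCommGroup M] [Module R M] [AddCommGroup N]
  [Module R N] [Fintype ι] {p : ι → Module.End R M}

theorem sum_apply (hp : IsCyclicDecomposition p) (x : M) : ∑ i, p i x = x := by
  simpa using LinearMap.congr_fun hp.sum_eq_id x

theorem conj (hp : IsCyclicDecomposition p) (e : M ≃ₗ[R] N) :
    IsCyclicDecomposition fun i => e.conj (p i) where
  sum_eq_id := by rw [← map_sum, hp.sum_eq_id, LinearEquiv.conj_id]
  isPrincipal_range i := by
    rw [LinearEquiv.conj_apply, LinearMap.range_comp_of_range_eq_top _ (LinearEquiv.range _),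
      LinearMap.range_comp]
    exact (hp.isPrincipal_range i).map _

theorem prod {κ : Type*} [Fintype κ] {q : κ → Module.End R N} (hp : IsCyclicDecomposition p)
    (hq : IsCyclicDecomposition q) :
    IsCyclicDecomposition (Sum.elim (fun i => LinearMap.inl R M N ∘ₗ p i ∘ₗ LinearMap.fst R M N)
      (fun j => LinearMap.inr R M N ∘ₗ q j ∘ₗ LinearMap.snd R M N)) where
  sum_eq_id := by
    ext z <;> simp [Fintype.sum_sum_type, Prod.fst_sum, Prod.snd_sum, hp.sum_apply, hq.sum_apply]
  isPrincipal_range := by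
    rintro (i | j)
    · rw [Sum.elim_inl, LinearMap.range_comp,
        LinearMap.range_comp_of_range_eq_top _ Submodule.range_fst]
      exact (hp.isPrincipal_range i).map _
    · rw [Sum.elim_inr, LinearMap.range_comp,
        LinearMap.range_comp_of_range_eq_top _ Submodule.range_snd]
      exact (hq.isPrincipal_range j).map _

theorem directSum [DecidableEq ι] (C : ι → Type*) [∀ i, AddCommGroup (C i)] [∀ i, Module R (C i)]
    (hC : ∀ i, (⊤ : Submodule R (C i)).IsPrincipal) :
    IsCyclicDecomposition fun i => DirectSum.lof R ι C i ∘ₗ DirectSum.component R ι C i where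
  sum_eq_id := LinearMap.ext fun x => by
    simp only [LinearMap.sum_apply, LinearMap.comp_apply, LinearMap.id_apply]
    exact DirectSum.sum_univ_of x
  isPrincipal_range i := by
    rw [LinearMap.range_comp_of_range_eq_top _ (LinearMap.range_eq_top.2
      fun x => ⟨_, DirectSum.component.lof_self R (M := C) i x⟩), LinearMap.range_eq_map]
    exact (hC i).map _

end IsCyclicDecomposition

theorem exists_isCyclicDecomposition {R : Type u} {M : Type*} [CommRing R] [IsDomain R]
    [IsPrincipalIdealRing R] [AddCommGroup M] [Module R M] [Module.Finite R M] :
    ∃ (ι : Type u) (_ : Fintype ι) (p : ι → Module.End R M), IsCyclicDecomposition p := by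
  classical
  obtain ⟨n, ι, _, P, -, e, ⟨f⟩⟩ := Module.equiv_free_prod_directSum (R := R) (M := M)
  have free := (IsCyclicDecomposition.directSum (fun _ : Fin n => R) fun _ =>
    top_isPrincipal).conj (finsuppLEquivDirectSum R R (Fin n)).symm
  have torsion := IsCyclicDecomposition.directSum (fun i => R ⧸ R ∙ P i ^ e i) fun i => by
    simpa using (top_isPrincipal (R := R)).map (R ∙ P i ^ e i).mkQ
  exact ⟨_, _, _, (free.prod torsion).conj f.symm⟩

namespace TensorProduct

section DiagonalSpan

variable (R M : Type*) [CommRing R] [AddCommGroup M] [Module R M]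

def diagonalSpan : Submodule R (M ⊗[R] M) :=
  Submodule.span R (Set.range fun m : M => m ⊗ₜ[R] m)

variable {R M}

theorem tmul_self_mem_diagonalSpan (m : M) : m ⊗ₜ[R] m ∈ diagonalSpan R M :=
  Submodule.subset_span ⟨m, rfl⟩

theorem tmul_add_tmul_comm_mem_diagonalSpan (x y : M) :
    x ⊗ₜ[R] y + y ⊗ₜ[R] x ∈ diagonalSpan R M := by
  have hpolar : x ⊗ₜ[R] y + y ⊗ₜ[R] x = (x + y) ⊗ₜ[R] (x + y) - x ⊗ₜ[R] x - y ⊗ₜ[R] y := by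
    simp only [add_tmul, tmul_add]
    abel
  rw [hpolar]
  exact sub_mem (sub_mem (tmul_self_mem_diagonalSpan _) (tmul_self_mem_diagonalSpan _))
    (tmul_self_mem_diagonalSpan _)

theorem tmul_mem_diagonalSpan_of_isPrincipal {S : Submodule R M} (hS : S.IsPrincipal)
    {x y : M} (hx : x ∈ S) (hy : y ∈ S) : x ⊗ₜ[R] y ∈ diagonalSpan R M := by
  rw [← hS.span_singleton_generator, Submodule.mem_span_singleton] at hx hy
  obtain ⟨a, rfl⟩ := hx
  obtain ⟨b, rfl⟩ := hy
  rw [smul_tmul_smul]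
  exact Submodule.smul_mem _ _ (tmul_self_mem_diagonalSpan _)

end DiagonalSpan

section DiagonalProjection

variable {R M ι : Type*} [CommRing R] [AddCommGroup M] [Module R M] [Fintype ι] [LinearOrder ι]

noncomputable def diagonalProjection (p : ι → Module.End R M) : Module.End R (M ⊗[R] M) :=
  ∑ i, ∑ j, if i = j then map (p i) (p j)
    else if i < j then (LinearMap.id + (TensorProduct.comm R M M).toLinearMap) ∘ₗ map (p i) (p j)
    else 0

theorem diagonalProjection_tmul_self {p : ι → Module.End R M} (hp : IsCyclicDecomposition p)
    (a : M) : diagonalProjection p (a ⊗ₜ a) = a ⊗ₜ a := by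
  calc diagonalProjection p (a ⊗ₜ a)
      = ∑ i, ∑ j, (if i = j then p i a ⊗ₜ[R] p j a
          else if i < j then p i a ⊗ₜ[R] p j a + p j a ⊗ₜ[R] p i a else 0) := by
        simp only [diagonalProjection, LinearMap.sum_apply]
        refine Finset.sum_congr rfl fun i _ => Finset.sum_congr rfl fun j _ => ?_
        split_ifs <;> simp
    _ = ∑ i, ∑ j, p i a ⊗ₜ[R] p j a := Fintype.sum_sum_ite_lt_add _
    _ = a ⊗ₜ a := by simp_rw [← tmul_sum, ← sum_tmul, hp.sum_apply]

theorem isProj_diagonalProjection {p : ι → Module.End R M} (hp : IsCyclicDecomposition p) :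
    LinearMap.IsProj (diagonalSpan R M) (diagonalProjection p) where
  map_mem z := by
    simp only [diagonalProjection, LinearMap.sum_apply]
    refine Submodule.sum_mem _ fun i _ => Submodule.sum_mem _ fun j _ => ?_
    induction z using TensorProduct.induction_on with
    | zero => rw [map_zero]; exact zero_mem _
    | add u v hu hv => rw [map_add]; exact add_mem hu hv
    | tmul x y =>
      split_ifs with hij hlt
      · subst hij
        exact tmul_mem_diagonalSpan_of_isPrincipal (hp.isPrincipal_range i)
          (LinearMap.mem_range_self _ x) (LinearMap.mem_range_self _ y)
      · simpa using tmul_add_tmul_comm_mem_diagonalSpan (p i x) (p j y)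
      · exact zero_mem _
  map_id z hz := by
    refine LinearMap.eqOn_span' (g := LinearMap.id) ?_ hz
    rintro _ ⟨a, rfl⟩
    exact diagonalProjection_tmul_self hp a

end DiagonalProjection

theorem exists_isProj_diagonalSpan (R M : Type*) [CommRing R] [IsDomain R]
    [IsPrincipalIdealRing R] [AddCommGroup M] [Module R M] [Module.Finite R M] :
    ∃ B : Module.End R (M ⊗[R] M), LinearMap.IsProj (diagonalSpan R M) B := by
  obtain ⟨ι, _, p, hp⟩ := exists_isCyclicDecomposition (R := R) (M := M)
  let : LinearOrder ι := LinearOrder.lift' _ (Fintype.equivFin ι).injective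
  exact ⟨_, isProj_diagonalProjection hp⟩

end TensorProduct

noncomputable def Subgroup.equivProdQuotientOfRetraction {G : Type*} [Group G] (H : Subgroup G)
    [H.Normal] (r : G →* H) (hr : ∀ y : H, r y = y) : G ≃* H × G ⧸ H :=
  MulEquiv.ofBijective (r.prod (QuotientGroup.mk' H)) <| by
    refine ⟨(injective_iff_map_eq_one _).2 fun x hx => ?_, ?_⟩
    · obtain ⟨hrx, hx⟩ := Prod.mk_eq_one.1 hx
      have hxH : x ∈ H := (QuotientGroup.eq_one_iff x).1 hx
      exact congrArg Subtype.val ((hr ⟨x, hxH⟩).symm.trans hrx)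
    · rintro ⟨h, q⟩
      obtain ⟨g, rfl⟩ := QuotientGroup.mk'_surjective H q
      refine ⟨h * (r g : G)⁻¹ * g, Prod.ext (by simp [hr]) ?_⟩
      simp [QuotientGroup.eq_one_iff, h.2, (r g).2]

namespace NATensor

theorem tmul_self_mem_nabla {G : Type*} [Group G] (x : G) : tmul x x ∈ nabla G :=
  Subgroup.subset_normalClosure ⟨x, rfl⟩

variable {A : Type*} [CommGroup A]

theorem tmul_mul_left (g g' h : A) : tmul (g * g') h = tmul g' h * tmul g h := by
  simpa only [mul_inv_cancel_comm] using tmul_rel₁ g g' h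

theorem tmul_mul_right (g h h' : A) : tmul g (h * h') = tmul g h * tmul g h' := by
  simpa only [mul_inv_cancel_comm] using tmul_rel₂ g h h'

theorem commute_tmul (a b c d : A) : Commute (tmul a b) (tmul c d) := by
  have h := (tmul_mul_right (a * c) b d).symm.trans (tmul_mul_left a c (b * d))
  simp only [tmul_mul_left, tmul_mul_right, mul_assoc, mul_right_inj] at h
  simp only [← mul_assoc, mul_left_inj] at h
  exact h

instance : CommGroup (TS A) :=
  { (inferInstance : Group (TS A)) with
    mul_comm x y := by
      have := Subgroup.isMulCommutative_closure (k := Set.range (PresentedGroup.of (rels := rels A)))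
        (by rintro _ ⟨⟨a, b⟩, rfl⟩ _ ⟨⟨c, d⟩, rfl⟩; exact commute_tmul a b c d)
      rw [PresentedGroup.closure_range_of] at this
      exact setLike_mul_comm (Subgroup.mem_top x) (Subgroup.mem_top y) }

variable (A) in
noncomputable def tensorSquareEquiv : TS A ≃* Multiplicative (Additive A ⊗[ℤ] Additive A) :=
  MonoidHom.toMulEquiv
    (PresentedGroup.toGroup (f := fun x => .ofAdd (.ofMul x.1 ⊗ₜ .ofMul x.2)) (by
      rintro r (⟨g, g', h, rfl⟩ | ⟨g, h, h', rfl⟩) <;>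
        simp only [map_mul, map_inv, FreeGroup.lift_apply_of, mul_inv_eq_one, mul_inv_cancel_comm,
          ofMul_mul, add_tmul, tmul_add, ← ofAdd_add, add_comm]))
    (AddMonoidHom.toMultiplicativeLeft <| liftAddHom
      (AddMonoidHom.mk' (fun a => AddMonoidHom.mk' (fun b => .ofMul (tmul a.toMul b.toMul))
          fun b b' => congrArg Additive.ofMul (tmul_mul_right _ _ _))
        fun a a' => AddMonoidHom.ext fun b => congrArg Additive.ofMul <|
          (tmul_mul_left _ _ _).trans (mul_comm _ _))
      fun r m n => by simp [map_zsmul])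
    (PresentedGroup.ext fun x => by simp [tmul])
    (MonoidHom.ext fun z => by
      induction z using Multiplicative.rec with | ofAdd z => ?_
      induction z using TensorProduct.induction_on with
      | zero => simp
      | tmul a b => simp [tmul]
      | add u v hu hv => simp_all)

@[simp]
theorem tensorSquareEquiv_tmul (g h : A) :
    tensorSquareEquiv A (tmul g h) = .ofAdd (.ofMul g ⊗ₜ .ofMul h) := by
  simp [tensorSquareEquiv, tmul]

@[simp]
theorem tensorSquareEquiv_symm_tmul (a b : Additive A) :
    (tensorSquareEquiv A).symm (.ofAdd (a ⊗ₜ b)) = tmul a.toMul b.toMul := by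
  rw [MulEquiv.symm_apply_eq, tensorSquareEquiv_tmul]
  rfl

theorem mem_nabla_iff {x : TS A} :
    x ∈ nabla A ↔ (tensorSquareEquiv A x).toAdd ∈ diagonalSpan ℤ (Additive A) := by
  constructor
  · refine fun hx => Subgroup.normalClosure_le_normal
      (N := (AddSubgroup.toSubgroup (diagonalSpan ℤ (Additive A)).toAddSubgroup).comap
        (tensorSquareEquiv A).toMonoidHom) ?_ hx
    rintro _ ⟨a, rfl⟩
    exact tmul_self_mem_diagonalSpan (Additive.ofMul a)
  · refine fun hx => (tensorSquareEquiv A).symm_apply_apply x ▸ Submodule.span_le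
      (p := AddSubgroup.toIntSubmodule (Subgroup.toAddSubgroup'
        ((nabla A).comap (tensorSquareEquiv A).symm.toMonoidHom))).2 ?_ hx
    rintro _ ⟨a, rfl⟩
    simpa using tmul_self_mem_nabla a.toMul

theorem exists_retraction_nabla (A : Type*) [CommGroup A] [Group.FG A] :
    ∃ r : TS A →* nabla A, ∀ y : nabla A, r y = y := by
  have : Module.Finite ℤ (Additive A) := Module.Finite.iff_addGroup_fg.mpr inferInstance
  obtain ⟨B, hB⟩ := exists_isProj_diagonalSpan ℤ (Additive A)
  let f : TS A →* TS A := (tensorSquareEquiv A).symm.toMonoidHom.comp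
    ((AddMonoidHom.toMultiplicative B.toAddMonoidHom).comp (tensorSquareEquiv A).toMonoidHom)
  refine ⟨f.codRestrict _ fun x => mem_nabla_iff.2 ?_, fun y => Subtype.ext ?_⟩
  · simpa [f] using hB.map_mem _
  · simp [f, hB.map_id _ (mem_nabla_iff.1 y.2)]

end NATensor

open NATensor in
/-- for a finitely generated abelian group `A`, the short exact sequence
`1 → ∇(A) → A ⊗ A → A ∧ A → 1` splits on the left (there is a homomorphism
`α : A ⊗ A → ∇(A)` restricting to the identity on `∇(A)`); consequently
`A ⊗ A ≅ ∇(A) × (A ∧ A)`. -/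
theorem tensor_square_splits_of_fg_abelian (A : Type*) [CommGroup A] [Group.FG A] :
    (∃ α : TS A →* ↥(nabla A), ∀ y : ↥(nabla A), α (y : TS A) = y) ∧
    Nonempty (TS A ≃* ↥(nabla A) × ES A) := by
  obtain ⟨r, hr⟩ := exists_retraction_nabla A
  exact ⟨⟨r, hr⟩, ⟨Subgroup.equivProdQuotientOfRetraction _ r hr⟩⟩
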